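/- Let A be a finite nonempty set, Q, Q' : A → ℝ, and let π, π' be the softmax distributions induced by Q and Q'. Then the KL divergence satisfies KL(π ‖ π') = Σ_a π(a) log(π(a)/π'(a)) ≤ 2 * ‖Q - Q'‖_∞. -/

import Mathlib

/-!
Writing `S = ∑ exp Q` and `S' = ∑ exp Q'`, the log-ratio of the two softmax distributions is
`(Q a - Q' a) + (log S' - log S)`, so the KL divergence is the `π`-average of `Q - Q'` plus the
difference of the two log-sum-exps. The average is at most `‖Q - Q'‖_∞`, and so is
`log S' - log S`, since `exp (Q' a) ≤ exp ‖Q - Q'‖_∞ * exp (Q a)` termwise.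
-/

open Real Finset

theorem log_sum_exp_le_add {ι : Type*} {s : Finset ι} (hs : s.Nonempty) {f g : ι → ℝ} {c : ℝ}
    (h : ∀ i ∈ s, f i ≤ g i + c) :
    log (∑ i ∈ s, exp (f i)) ≤ log (∑ i ∈ s, exp (g i)) + c := by
  have hsum : ∑ i ∈ s, exp (f i) ≤ exp c * ∑ i ∈ s, exp (g i) := by
    rw [mul_sum]
    refine sum_le_sum fun i hi => ?_
    rw [← exp_add, add_comm]
    exact exp_le_exp.mpr (h i hi)
  calc log (∑ i ∈ s, exp (f i))
      ≤ log (exp c * ∑ i ∈ s, exp (g i)) := log_le_log (sum_pos (fun _ _ => exp_pos _) hs) hsum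
    _ = log (∑ i ∈ s, exp (g i)) + c := by
      rw [log_mul (exp_pos c).ne' (sum_pos (fun _ _ => exp_pos _) hs).ne', log_exp, add_comm]

section Softmax

variable {ι : Type*} [Fintype ι]

noncomputable def softmax (f : ι → ℝ) (i : ι) : ℝ := exp (f i) / ∑ j, exp (f j)

theorem sum_exp_pos [Nonempty ι] (f : ι → ℝ) : 0 < ∑ j, exp (f j) :=
  sum_pos (fun _ _ => exp_pos _) univ_nonempty

theorem softmax_nonneg (f : ι → ℝ) (i : ι) : 0 ≤ softmax f i := by
  unfold softmax
  positivity

theorem sum_softmax [Nonempty ι] (f : ι → ℝ) : ∑ i, softmax f i = 1 := by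
  simp only [softmax]
  rw [← sum_div, div_self (sum_exp_pos f).ne']

theorem sum_softmax_mul_le [Nonempty ι] (f u : ι → ℝ) {c : ℝ} (h : ∀ i, u i ≤ c) :
    ∑ i, softmax f i * u i ≤ c :=
  calc ∑ i, softmax f i * u i
      ≤ ∑ i, softmax f i * c :=
        sum_le_sum fun i _ => mul_le_mul_of_nonneg_left (h i) (softmax_nonneg f i)
    _ = c := by rw [← sum_mul, sum_softmax, one_mul]

theorem log_softmax_div_softmax [Nonempty ι] (f g : ι → ℝ) (i : ι) :
    log (softmax f i / softmax g i) =
      f i - g i + (log (∑ j, exp (g j)) - log (∑ j, exp (f j))) := by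
  have hf := (sum_exp_pos f).ne'
  have hg := (sum_exp_pos g).ne'
  rw [softmax, softmax, log_div (div_pos (exp_pos _) (sum_exp_pos f)).ne'
    (div_pos (exp_pos _) (sum_exp_pos g)).ne', log_div (exp_ne_zero _) hf,
    log_div (exp_ne_zero _) hg, log_exp, log_exp]
  ring

theorem kl_softmax_eq [Nonempty ι] (f g : ι → ℝ) :
    ∑ i, softmax f i * log (softmax f i / softmax g i) =
      ∑ i, softmax f i * (f i - g i) + (log (∑ j, exp (g j)) - log (∑ j, exp (f j))) := by
  simp only [log_softmax_div_softmax, mul_add, sum_add_distrib, ← sum_mul, sum_softmax, one_mul]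

end Softmax

theorem softmax_kl_bound {A : Type*} [Fintype A] [Nonempty A] (Q Q' : A → ℝ) :
    ∑ a, (Real.exp (Q a) / ∑ a', Real.exp (Q a')) *
        Real.log ((Real.exp (Q a) / ∑ a', Real.exp (Q a')) /
          (Real.exp (Q' a) / ∑ a', Real.exp (Q' a'))) ≤
      2 * ⨆ a', |Q a' - Q' a'| := by
  change ∑ a, softmax Q a * log (softmax Q a / softmax Q' a) ≤ _
  set M := ⨆ a', |Q a' - Q' a'|
  have hM : ∀ a, |Q a - Q' a| ≤ M := le_ciSup (Set.finite_range _).bddAbove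
  have h_avg : ∑ a, softmax Q a * (Q a - Q' a) ≤ M :=
    sum_softmax_mul_le Q _ fun a => (le_abs_self _).trans (hM a)
  have h_lse : log (∑ a, exp (Q' a)) ≤ log (∑ a, exp (Q a)) + M :=
    log_sum_exp_le_add univ_nonempty fun a _ => by linarith [(abs_le.mp (hM a)).1]
  rw [kl_softmax_eq]
  linarith
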